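/- arXiv:2012.13164 — 8 statements merged into one kernel-verified Lean document; each statement's English description precedes it below -/
import Mathlib

section
/- Let u_1, ..., u_n be unit vectors in ℝ^d and suppose the signs ε_1, ..., ε_n ∈ {±1} are chosen so as to maximize |∑_{i=1}^n ε_i u_i|. Then for every i, the inner product ⟨ε_i u_i, ∑_{j=1}^n ε_j u_j⟩ ≥ 1. -/
open Finset RealInnerProductSpace

theorem stmt_1 (d n : ℕ) (u : Fin n → EuclideanSpace ℝ (Fin d))
    (hu : ∀ i, ‖u i‖ = 1) (ε : Fin n → ℝ) (hε : ∀ i, ε i = 1 ∨ ε i = -1)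
    (hmax : ∀ ε' : Fin n → ℝ, (∀ i, ε' i = 1 ∨ ε' i = -1) →
      ‖∑ i, ε' i • u i‖ ≤ ‖∑ i, ε i • u i‖) :
    ∀ i, ⟪ε i • u i, ∑ j, ε j • u j⟫ ≥ 1 := by
  intro i
  set S := ∑ j, ε j • u j with hS
  set b : EuclideanSpace ℝ (Fin d) := ε i • u i with hb
  set ε' : Fin n → ℝ := fun j => if j = i then -ε j else ε j with hε'
  have hε'mem : ∀ j, ε' j = 1 ∨ ε' j = -1 := by
    intro j
    simp only [hε']
    split
    · rcases hε j with h | h <;> simp [h]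
    · exact hε j
  have hsum : ∑ j, ε' j • u j = S - (2 : ℝ) • b := by
    have h1 : ∑ j, ε' j • u j - S = ∑ j, (ε' j • u j - ε j • u j) := by
      rw [hS, Finset.sum_sub_distrib]
    have h2 : ∑ j, (ε' j • u j - ε j • u j) = -((2 : ℝ) • b) := by
      rw [Fintype.sum_eq_single i]
      · simp only [hε', if_pos rfl, hb]
        module
      · intro j hj
        simp [hε', if_neg hj]
    have h3 := h1.trans h2
    rw [sub_eq_iff_eq_add] at h3
    rw [h3]; abel
  have hle : ‖S - (2 : ℝ) • b‖ ≤ ‖S‖ := hsum ▸ hmax ε' hε'mem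
  have hsq : ‖S - (2 : ℝ) • b‖ ^ 2 ≤ ‖S‖ ^ 2 := by
    exact pow_le_pow_left₀ (norm_nonneg _) hle 2
  have hexp : ‖S - (2 : ℝ) • b‖ ^ 2 = ‖S‖ ^ 2 - 2 * ⟪S, (2 : ℝ) • b⟫ + ‖(2 : ℝ) • b‖ ^ 2 :=
    norm_sub_sq_real S _
  have hbnorm : ‖b‖ = 1 := by
    rw [hb, norm_smul]
    rcases hε i with h | h <;> simp [h, hu i]
  have hbn2 : ‖(2 : ℝ) • b‖ ^ 2 = 4 := by
    rw [norm_smul, hbnorm]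
    norm_num
  have hinner : ⟪S, (2 : ℝ) • b⟫ = 2 * ⟪b, S⟫ := by
    rw [real_inner_smul_right, real_inner_comm]
  rw [hexp, hbn2, hinner] at hsq
  linarith
end

section
/- For any d+1 unit vectors u_1, ..., u_{d+1} in ℝ^d, there exist indices i < j and signs ε_1, ε_2 ∈ {±1} such that |ε_1 u_i + ε_2 u_j| ≥ √(2 + 2/d). -/
open RealInnerProductSpace

theorem stmt_4 (d : ℕ) (hd : 1 ≤ d) (u : Fin (d + 1) → EuclideanSpace ℝ (Fin d))
    (hu : ∀ i, ‖u i‖ = 1) :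
    ∃ i j : Fin (d + 1), i < j ∧ ∃ ε₁ ε₂ : ℝ,
      (ε₁ = 1 ∨ ε₁ = -1) ∧ (ε₂ = 1 ∨ ε₂ = -1) ∧
      ‖ε₁ • u i + ε₂ • u j‖ ≥ Real.sqrt (2 + 2 / d) := by
  have hd' : (0:ℝ) < d := by exact_mod_cast hd
  have hd0 : (d:ℝ) ≠ 0 := ne_of_gt hd'
  -- Step 1: the vectors are linearly dependent.
  have hdep : ¬ LinearIndependent ℝ u := by
    intro h
    have := h.fintype_card_le_finrank
    simp [finrank_euclideanSpace] at this
  obtain ⟨g, hsum, i₀, hi₀⟩ := Fintype.not_linearIndependent_iff.mp hdep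
  -- Step 2: pick index maximizing |g i|.
  obtain ⟨m, -, hm⟩ := Finset.exists_max_image Finset.univ (fun i => |g i|)
    ⟨i₀, Finset.mem_univ i₀⟩
  have hgm : 0 < |g m| := lt_of_lt_of_le (abs_pos.mpr hi₀) (hm i₀ (Finset.mem_univ i₀))
  have hinner : ∀ i, ⟪u i, u i⟫ = 1 := by
    intro i
    rw [real_inner_self_eq_norm_sq, hu i]; norm_num
  have h0 : ∑ j, g j * ⟪u m, u j⟫ = 0 := by
    have h : ⟪u m, ∑ i, g i • u i⟫ = (0:ℝ) := by rw [hsum, inner_zero_right]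
    rw [inner_sum] at h
    simp only [real_inner_smul_right] at h
    exact h
  have hcard : (Finset.univ.erase m).card = d := by
    simp [Finset.card_erase_of_mem]
  have hne : (Finset.univ.erase m).Nonempty := by
    rw [← Finset.card_pos, hcard]; exact hd
  have key : ∃ j, j ≠ m ∧ 1 / d ≤ |⟪u m, u j⟫| := by
    by_contra hcon
    push_neg at hcon
    have h0' : g m * ⟪u m, u m⟫ + ∑ j ∈ Finset.univ.erase m, g j * ⟪u m, u j⟫ = 0 := by
      have h := Finset.add_sum_erase Finset.univ (fun j => g j * ⟪u m, u j⟫) (Finset.mem_univ m)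
      beta_reduce at h
      rw [h]; exact h0
    have hsplit : g m * ⟪u m, u m⟫ = -∑ j ∈ Finset.univ.erase m, g j * ⟪u m, u j⟫ := by
      linarith
    have hlt : |g m| < |g m| := by
      calc |g m| = |g m * ⟪u m, u m⟫| := by rw [hinner m, mul_one]
        _ = |∑ j ∈ Finset.univ.erase m, g j * ⟪u m, u j⟫| := by rw [hsplit, abs_neg]
        _ ≤ ∑ j ∈ Finset.univ.erase m, |g j * ⟪u m, u j⟫| := Finset.abs_sum_le_sum_abs _ _
        _ < ∑ j ∈ Finset.univ.erase m, |g m| * (1 / d) := by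
            apply Finset.sum_lt_sum_of_nonempty hne
            intro j hj
            rw [abs_mul]
            calc |g j| * |⟪u m, u j⟫| ≤ |g m| * |⟪u m, u j⟫| :=
                  mul_le_mul_of_nonneg_right (hm j (Finset.mem_univ j)) (abs_nonneg _)
              _ < |g m| * (1 / d) :=
                  mul_lt_mul_of_pos_left (hcon j (Finset.ne_of_mem_erase hj)) hgm
        _ = |g m| := by
            rw [Finset.sum_const, hcard, nsmul_eq_mul]
            field_simp
    exact lt_irrefl _ hlt
  obtain ⟨j, hjm, hj⟩ := key
  -- Step 3: order the pair and choose signs.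
  have main : ∀ a b : Fin (d+1), 1 / (d:ℝ) ≤ |⟪u a, u b⟫| →
      ∃ ε₁ ε₂ : ℝ, (ε₁ = 1 ∨ ε₁ = -1) ∧ (ε₂ = 1 ∨ ε₂ = -1) ∧
        ‖ε₁ • u a + ε₂ • u b‖ ≥ Real.sqrt (2 + 2 / d) := by
    intro a b hab
    set t := ⟪u a, u b⟫ with ht
    refine ⟨1, if 0 ≤ t then 1 else -1, Or.inl rfl, by split <;> simp, ?_⟩
    have hnormsq : ‖(1:ℝ) • u a + (if 0 ≤ t then (1:ℝ) else -1) • u b‖^2 = 2 + 2 * |t| := by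
      rw [norm_add_sq_real]
      rw [norm_smul, norm_smul, real_inner_smul_left, real_inner_smul_right]
      split <;> rename_i h
      · rw [abs_of_nonneg h]
        simp [hu a, hu b, ← ht]
        ring
      · rw [abs_of_neg (lt_of_not_ge h)]
        simp [hu a, hu b, ← ht]
        ring
    have h1 : (2 : ℝ) + 2 / d ≤ 2 + 2 * |t| := by
      have : 2 / (d:ℝ) ≤ 2 * |t| := by
        rw [div_eq_mul_one_div]
        nlinarith
      linarith
    calc Real.sqrt (2 + 2 / d) ≤ Real.sqrt (2 + 2 * |t|) := Real.sqrt_le_sqrt h1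
      _ = ‖(1:ℝ) • u a + (if 0 ≤ t then (1:ℝ) else -1) • u b‖ := by
          rw [← hnormsq, Real.sqrt_sq (norm_nonneg _)]
  rcases lt_or_gt_of_ne hjm with h | h
  · obtain ⟨ε₁, ε₂, h1, h2, h3⟩ := main j m (by rwa [real_inner_comm])
    exact ⟨j, m, h, ε₁, ε₂, h1, h2, h3⟩
  · obtain ⟨ε₁, ε₂, h1, h2, h3⟩ := main m j hj
    exact ⟨m, j, h, ε₁, ε₂, h1, h2, h3⟩
end

section
/- Let d be even and let u_1, ..., u_{d+1} be unit vectors in ℝ^d with ∑_{i=1}^{d+1} u_i = 0. Then there exist signs ε_1, ..., ε_{d+1} ∈ {±1} such that |ε_1 u_1 + ... + ε_{d+1} u_{d+1}| ≥ √(d+2). -/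
open Finset
open scoped RealInnerProductSpace

/-! Choose signs `ε` maximizing `‖v‖` for `v = ∑ εᵢ uᵢ`. Flipping a single sign cannot increase
the norm, which gives Bang's inequality `εᵢ ⟪v, uᵢ⟫ ≥ ‖uᵢ‖² = 1`. The numbers `aᵢ = ⟪v, uᵢ⟫` sum to
zero and `‖v‖² = ∑ εᵢ aᵢ`, so `‖v‖² = 2 ∑_{εᵢ = σ} σ aᵢ ≥ 2 #{i | εᵢ = σ}` for either sign `σ`.
Since `d + 1` is odd, one sign class has at least `d / 2 + 1` members, whence `‖v‖² ≥ d + 2`. -/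

def signVectors (ι : Type*) : Set (ι → ℝ) := Set.univ.pi fun _ => {1, -1}

lemma mem_signVectors {ι : Type*} {ε : ι → ℝ} :
    ε ∈ signVectors ι ↔ ∀ i, ε i = 1 ∨ ε i = -1 := by
  simp [signVectors]

lemma signVectors_finite (ι : Type*) [Finite ι] : (signVectors ι).Finite :=
  Set.Finite.pi fun _ => Set.toFinite _

lemma update_neg_mem_signVectors {ι : Type*} [DecidableEq ι] {ε : ι → ℝ}
    (hε : ε ∈ signVectors ι) (i : ι) : Function.update ε i (-ε i) ∈ signVectors ι := by
  rw [mem_signVectors] at hε ⊢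
  intro j
  rcases eq_or_ne j i with rfl | hj
  · rcases hε j with h | h <;> simp [h]
  · simpa [hj] using hε j

lemma norm_sq_le_mul_inner_of_norm_sub_le {E : Type*} [NormedAddCommGroup E]
    [InnerProductSpace ℝ E] {v x : E} {σ : ℝ} (hσ : σ = 1 ∨ σ = -1)
    (h : ‖v - (2 * σ) • x‖ ≤ ‖v‖) : ‖x‖ ^ 2 ≤ σ * ⟪v, x⟫ := by
  have hsq : ‖v - (2 * σ) • x‖ ^ 2 ≤ ‖v‖ ^ 2 := pow_le_pow_left₀ (norm_nonneg _) h 2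
  have hσσ : σ * σ = 1 := by rcases hσ with rfl | rfl <;> norm_num
  rw [norm_sub_sq_real, real_inner_smul_right, norm_smul, mul_pow, Real.norm_eq_abs,
    sq_abs] at hsq
  nlinarith

section
variable {ι E : Type*} [Fintype ι] [NormedAddCommGroup E] [InnerProductSpace ℝ E]

lemma exists_isMaxOn_norm_sum_smul (u : ι → E) :
    ∃ ε ∈ signVectors ι, IsMaxOn (fun ε => ‖∑ i, ε i • u i‖) (signVectors ι) ε :=
  (Set.exists_max_image _ _ (signVectors_finite ι) ⟨fun _ => 1, by simp [mem_signVectors]⟩).imp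
    fun _ h => ⟨h.1, isMaxOn_iff.2 h.2⟩

lemma sum_update_smul [DecidableEq ι] (ε : ι → ℝ) (u : ι → E) (i : ι) (c : ℝ) :
    ∑ j, Function.update ε i c j • u j = ∑ j, ε j • u j + (c - ε i) • u i := by
  rw [← sub_eq_iff_eq_add', ← sum_sub_distrib, sum_eq_single i]
  · simp [sub_smul]
  · intro j _ hj
    simp [hj]
  · simp

lemma norm_sq_le_mul_inner_of_isMaxOn {u : ι → E} {ε : ι → ℝ} (hε : ε ∈ signVectors ι)
    (hmax : IsMaxOn (fun ε => ‖∑ i, ε i • u i‖) (signVectors ι) ε) (i : ι) :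
    ‖u i‖ ^ 2 ≤ ε i * ⟪∑ j, ε j • u j, u i⟫ := by
  classical
  refine norm_sq_le_mul_inner_of_norm_sub_le (mem_signVectors.1 hε i) ?_
  have hflip := isMaxOn_iff.1 hmax _ (update_neg_mem_signVectors hε i)
  rw [sum_update_smul] at hflip
  calc ‖∑ j, ε j • u j - (2 * ε i) • u i‖ = ‖∑ j, ε j • u j + (-ε i - ε i) • u i‖ := by
        congr 1; module
    _ ≤ _ := hflip

lemma norm_sum_smul_sq (ε : ι → ℝ) (u : ι → E) :
    ‖∑ i, ε i • u i‖ ^ 2 = ∑ i, ε i * ⟪∑ j, ε j • u j, u i⟫ := by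
  rw [← real_inner_self_eq_norm_sq, inner_sum]
  simp only [real_inner_smul_right]

lemma two_mul_card_le_sum_mul {ε a : ι → ℝ} (hε : ε ∈ signVectors ι)
    (ha : ∑ i, a i = 0) (hεa : ∀ i, 1 ≤ ε i * a i) {σ : ℝ} (hσ : σ = 1 ∨ σ = -1) :
    2 * (#{i | ε i = σ} : ℝ) ≤ ∑ i, ε i * a i := by
  calc 2 * (#{i | ε i = σ} : ℝ) = ∑ i, if ε i = σ then 2 else 0 := by
        rw [sum_ite, sum_const_zero, add_zero, sum_const, nsmul_eq_mul, mul_comm]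
    _ ≤ ∑ i, (ε i + σ) * a i := by
        refine sum_le_sum fun i _ => ?_
        have := hεa i
        rcases mem_signVectors.1 hε i with h | h <;> rcases hσ with rfl | rfl <;>
          simp only [h] at this ⊢ <;> norm_num <;> linarith
    _ = ∑ i, ε i * a i := by
        simp only [add_mul, sum_add_distrib, ← mul_sum, ha, mul_zero, add_zero]

lemma card_eq_one_add_card_eq_neg_one {ε : ι → ℝ} (hε : ε ∈ signVectors ι) :
    #{i | ε i = 1} + #{i | ε i = -1} = Fintype.card ι := by
  have hneg : univ.filter (fun i => ¬ε i = 1) = univ.filter (fun i => ε i = -1) :=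
    filter_congr fun i _ => by rcases mem_signVectors.1 hε i with h | h <;> norm_num [h]
  rw [← hneg, card_filter_add_card_filter_not, card_univ]

end

theorem stmt_8 (d : ℕ) (hd : Even d) (u : Fin (d + 1) → EuclideanSpace ℝ (Fin d))
    (hu : ∀ i, ‖u i‖ = 1) (hsum : ∑ i, u i = 0) :
    ∃ ε : Fin (d + 1) → ℝ, (∀ i, ε i = 1 ∨ ε i = -1) ∧
      ‖∑ i, ε i • u i‖ ≥ Real.sqrt (d + 2) := by
  obtain ⟨ε, hε, hmax⟩ := exists_isMaxOn_norm_sum_smul u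
  set v := ∑ i, ε i • u i
  have hbang (i) : 1 ≤ ε i * ⟪v, u i⟫ := by
    simpa [hu i] using norm_sq_le_mul_inner_of_isMaxOn hε hmax i
  have horth : ∑ i, ⟪v, u i⟫ = 0 := by rw [← inner_sum, hsum, inner_zero_right]
  have hcard {σ : ℝ} (hσ : σ = 1 ∨ σ = -1) : 2 * (#{i | ε i = σ} : ℝ) ≤ ‖v‖ ^ 2 :=
    norm_sum_smul_sq ε u ▸ two_mul_card_le_sum_mul hε horth hbang hσ
  have hsplit := card_eq_one_add_card_eq_neg_one hε
  rw [Fintype.card_fin] at hsplit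
  obtain ⟨k, rfl⟩ := hd
  obtain ⟨σ, hσ, hmajority⟩ : ∃ σ : ℝ, (σ = 1 ∨ σ = -1) ∧ k + 1 ≤ #{i | ε i = σ} := by
    rcases (by omega : k + 1 ≤ #{i | ε i = 1} ∨ k + 1 ≤ #{i | ε i = -1}) with h | h
    exacts [⟨1, .inl rfl, h⟩, ⟨-1, .inr rfl, h⟩]
  have hnorm : ((k + k : ℕ) : ℝ) + 2 ≤ ‖v‖ ^ 2 := by
    have hmajority' : (k : ℝ) + 1 ≤ #{i | ε i = σ} := by exact_mod_cast hmajority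
    push_cast
    linarith [hcard hσ]
  exact ⟨ε, mem_signVectors.1 hε, (Real.sqrt_le_left (norm_nonneg v)).2 hnorm⟩
end

section
/- If d is even, u_1, ..., u_{d+1} are unit vectors in ℝ^d with ∑ u_i = 0, ε ∈ {±1}^{d+1} satisfies ∑ ε_i ≥ 1, u = ∑ ε_i u_i, and ⟨ε_i u_i, u⟩ ≥ 1 for every i, then |u|² ≥ d + 2. -/
open Finset RealInnerProductSpace

theorem stmt_9 (d : ℕ) (hd : Even d) (u : Fin (d + 1) → EuclideanSpace ℝ (Fin d))
    (hu : ∀ i, ‖u i‖ = 1) (hsum : ∑ i, u i = 0)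
    (ε : Fin (d + 1) → ℝ) (hε : ∀ i, ε i = 1 ∨ ε i = -1)
    (hεsum : 1 ≤ ∑ i, ε i)
    (v : EuclideanSpace ℝ (Fin d)) (hv : v = ∑ i, ε i • u i)
    (hbang : ∀ i, ⟪ε i • u i, v⟫ ≥ 1) :
    ‖v‖ ^ 2 ≥ d + 2 := by
  have hv2 : v = ∑ i, (ε i + 1) • u i := by
    simp only [add_smul, one_smul, Finset.sum_add_distrib, hsum, add_zero, hv]
  have key : ∀ i, ⟪(ε i + 1) • u i, v⟫ ≥ 1 + ε i := by
    intro i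
    rcases hε i with h | h
    · have := hbang i
      rw [h] at this ⊢
      rw [real_inner_smul_left] at this ⊢
      linarith
    · rw [h]
      norm_num
  have hinner : ⟪v, v⟫ = ∑ i, ⟪(ε i + 1) • u i, v⟫ := by
    nth_rewrite 1 [hv2]
    rw [sum_inner]
  have hge : ⟪v, v⟫ ≥ ∑ i, (1 + ε i) := by
    rw [hinner]
    exact Finset.sum_le_sum fun i _ => key i
  have hsum' : ∑ i : Fin (d + 1), (1 + ε i) = (d + 1) + ∑ i, ε i := by
    rw [Finset.sum_add_distrib]
    simp
  rw [← real_inner_self_eq_norm_sq]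
  rw [hsum'] at hge
  push_cast at hge ⊢
  linarith
end

section
/- Let φ ∈ [0, π] and let u_1, ..., u_k be unit vectors in ℝ² whose angles all lie in [0, φ]. If k is odd, then |u_1 + ... + u_k| ≥ √(1 + (k−1)(k+1)·cos²(φ/2)). -/
/-!
Rotate by `-φ/2`, so that all angles lie in `[-a, a]` with `a = φ/2 ≤ π/2`. If `Re v ≥ 0`, then
`|v + e^{iθ}|² = |v|² + 1 + 2 (Re v cos θ + Im v sin θ)` is minimised over `θ ∈ [-a, a]` at
`θ = ±a`. Moving the vectors to `e^{±ia}` one at a time therefore never increases `|∑ u_i|²`,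
and the final sum is `k cos a + i m sin a` with `m ≡ k (mod 2)`. For odd `k` we get `m² ≥ 1`,
hence `|∑ u_i|² ≥ k² cos² a + sin² a = 1 + (k² - 1) cos² a`.
-/

open Finset Complex

theorem exists_sign_normSq_le {a x y θ : ℝ} (ha : a ≤ Real.pi / 2) (hx : 0 ≤ x)
    (hθ : |θ| ≤ a) :
    ∃ σ : ℤ, (σ = 1 ∨ σ = -1) ∧
      (x + Real.cos a) ^ 2 + (y + σ * Real.sin a) ^ 2 ≤
        (x + Real.cos θ) ^ 2 + (y + Real.sin θ) ^ 2 := by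
  obtain ⟨hθl, hθr⟩ := abs_le.1 hθ
  have hcos : Real.cos a ≤ Real.cos θ := by
    rw [← Real.cos_abs θ]
    exact Real.cos_le_cos_of_nonneg_of_le_pi (abs_nonneg θ) (by linarith [Real.pi_pos]) hθ
  have hsin : |Real.sin θ| ≤ Real.sin a := by
    rw [abs_le, ← Real.sin_neg]
    exact ⟨Real.sin_le_sin_of_le_of_le_pi_div_two (by linarith) (by linarith) hθl,
      Real.sin_le_sin_of_le_of_le_pi_div_two (by linarith) ha hθr⟩
  -- both sides are `x² + y² + 1 + 2 (x cos + y sin)`: pick `σ` against the sign of `y`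
  have hx' := mul_le_mul_of_nonneg_left hcos hx
  rcases le_total 0 y with hy | hy
  · refine ⟨-1, Or.inr rfl, ?_⟩
    have := mul_le_mul_of_nonneg_left (neg_le_of_abs_le hsin) hy
    push_cast
    nlinarith [Real.sin_sq_add_cos_sq a, Real.sin_sq_add_cos_sq θ]
  · refine ⟨1, Or.inl rfl, ?_⟩
    have := mul_le_mul_of_nonpos_left (le_of_abs_le hsin) hy
    push_cast
    nlinarith [Real.sin_sq_add_cos_sq a, Real.sin_sq_add_cos_sq θ]

theorem exists_normSq_add_sum_exp_ge {a : ℝ} (ha : a ≤ Real.pi / 2) :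
    ∀ {k : ℕ} (v : ℂ), 0 ≤ v.re → ∀ θ : Fin k → ℝ, (∀ i, |θ i| ≤ a) →
      ∃ m : ℤ, m ≡ k [ZMOD 2] ∧
        (v.re + k * Real.cos a) ^ 2 + (v.im + m * Real.sin a) ^ 2 ≤
          normSq (v + ∑ i, exp (θ i * I))
  | 0, v, _, _, _ => ⟨0, rfl, by simp [normSq_apply, sq]⟩
  | k + 1, v, hv, θ, hθ => by
    have hcos_nonneg {t : ℝ} (ht : |t| ≤ a) : 0 ≤ Real.cos t :=
      Real.cos_nonneg_of_neg_pi_div_two_le_of_le (by linarith [neg_abs_le t])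
        (by linarith [le_abs_self t])
    have hw : 0 ≤ (v + exp (θ 0 * I)).re := by
      rw [add_re, exp_ofReal_mul_I_re]
      linarith [hcos_nonneg (hθ 0)]
    obtain ⟨m, hm, hle⟩ :=
      exists_normSq_add_sum_exp_ge ha _ hw (θ ∘ Fin.succ) (fun i => hθ _)
    have hx : 0 ≤ v.re + k * Real.cos a :=
      add_nonneg hv (mul_nonneg k.cast_nonneg
        (hcos_nonneg (abs_of_nonneg ((abs_nonneg _).trans (hθ 0))).le))
    obtain ⟨σ, hσ, hσle⟩ := exists_sign_normSq_le (y := v.im + m * Real.sin a) ha hx (hθ 0)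
    refine ⟨m + σ, ?_, ?_⟩
    · unfold Int.ModEq at *
      push_cast
      omega
    · rw [Fin.sum_univ_succ, ← add_assoc]
      refine le_trans ?_ (hσle.trans (le_of_eq_of_le ?_ hle))
      · push_cast; apply le_of_eq; ring
      · simp only [add_re, add_im, exp_ofReal_mul_I_re, exp_ofReal_mul_I_im]
        ring

theorem norm_sum_exp_sub_mul_I {ι : Type*} (s : Finset ι) (ψ : ι → ℝ) (a : ℝ) :
    ‖∑ i ∈ s, exp ((ψ i - a : ℝ) * I)‖ = ‖∑ i ∈ s, exp (ψ i * I)‖ := by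
  have : ∑ i ∈ s, exp (ψ i * I) = exp (a * I) * ∑ i ∈ s, exp ((ψ i - a : ℝ) * I) := by
    rw [mul_sum]
    refine sum_congr rfl fun i _ => ?_
    rw [← exp_add]
    push_cast
    ring_nf
  rw [this, norm_mul, norm_exp_ofReal_mul_I, one_mul]

theorem one_le_sq_of_odd {m : ℤ} (hm : Odd m) : (1 : ℝ) ≤ m ^ 2 := by
  have : (1 : ℤ) ≤ m ^ 2 :=
    (one_le_sq_iff_one_le_abs m).2 (Int.one_le_abs (by rintro rfl; simp at hm))
  exact_mod_cast this

theorem stmt_15 (k : ℕ) (hk : Odd k) (φ : ℝ) (hφ : φ ∈ Set.Icc 0 Real.pi)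
    (u : Fin k → ℂ) (hu : ∀ i, ∃ ψ ∈ Set.Icc 0 φ, u i = Complex.exp (ψ * Complex.I)) :
    ‖∑ i, u i‖ ≥
      Real.sqrt (1 + ((k : ℝ) - 1) * ((k : ℝ) + 1) * Real.cos (φ / 2) ^ 2) := by
  choose ψ hψ hu using hu
  have hθ (i : Fin k) : |ψ i - φ / 2| ≤ φ / 2 :=
    abs_sub_le_iff.2 ⟨by linarith [(hψ i).2], by linarith [(hψ i).1]⟩
  obtain ⟨m, hm, hle⟩ :=
    exists_normSq_add_sum_exp_ge (by linarith [hφ.2]) 0 le_rfl (fun i => ψ i - φ / 2) hθ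
  have hm_odd : Odd m := by
    rw [Int.odd_iff, hm]
    exact_mod_cast Nat.odd_iff.1 hk
  rw [ge_iff_le, sum_congr rfl fun i _ => hu i, ← norm_sum_exp_sub_mul_I _ _ (φ / 2), norm_def]
  refine Real.sqrt_le_sqrt (le_trans ?_ (by simpa using hle))
  nlinarith [one_le_sq_of_odd hm_odd, Real.sin_sq_add_cos_sq (φ / 2), sq_nonneg (Real.sin (φ / 2))]
end

section
/- Given n unit vectors u_1, ..., u_n in ℝ² and 2 ≤ k ≤ n, among the 2n vectors ±u_1, ..., ±u_n there exist k of them all lying in a closed circular arc of angular length at most (k−1)π/n. -/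
/-!
Write each `±uᵢ` as `exp (i φᵢ)` with `φᵢ ∈ [0, π)` and sort the angles. Extending the sorted
sequence by `F (m + n) = F m + π` lists the angles of all `2n` vectors `±uᵢ` in increasing order.
The `n` spans `F (j + k - 1) - F j`, `j < n`, add up to `(k - 1) π`, so one of them is at most
`(k - 1) π / n`; the `k` consecutive angles `F j, …, F (j + k - 1)` then come from distinct `uᵢ`
because `k ≤ n`.
-/

open Finset Complex Real

lemma exists_sign_smul_eq_exp_mul_I {x : ℂ} (hx : ‖x‖ = 1) :
    ∃ e φ : ℝ, (e = 1 ∨ e = -1) ∧ φ ∈ Set.Ico 0 π ∧ e • x = Complex.exp (φ * I) := by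
  have hx' : Complex.exp (x.arg * I) = x := by
    simpa [hx] using norm_mul_exp_arg_mul_I x
  rcases lt_or_ge x.arg 0 with hneg | hnonneg
  · refine ⟨-1, x.arg + π, Or.inr rfl, ⟨by linarith [neg_pi_lt_arg x], by linarith⟩, ?_⟩
    rw [ofReal_add, add_mul, Complex.exp_add, exp_pi_mul_I, hx']
    simp
  rcases (arg_le_pi x).lt_or_eq with hlt | heq
  · exact ⟨1, x.arg, Or.inl rfl, ⟨hnonneg, hlt⟩, by rw [one_smul, hx']⟩
  · refine ⟨-1, 0, Or.inr rfl, ⟨le_rfl, pi_pos⟩, ?_⟩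
    rw [← hx', heq, exp_pi_mul_I]
    simp

lemma Fin.ofNat_add_injective {k n : ℕ} [NeZero n] (hkn : k ≤ n) (j : ℕ) :
    Function.Injective fun i : Fin k => Fin.ofNat n (j + i) := by
  intro i i' h
  have hmod : j + i ≡ j + i' [MOD n] := by
    simpa only [Nat.ModEq, Fin.val_ofNat] using Fin.val_eq_of_eq h
  have hmod' := Nat.ModEq.add_left_cancel' j hmod
  rw [Nat.ModEq, Nat.mod_eq_of_lt (by omega), Nat.mod_eq_of_lt (by omega)] at hmod'
  exact Fin.ext hmod'

section Telescoping

variable {F : ℕ → ℝ} {n : ℕ} {p : ℝ}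

lemma sum_range_sub_eq_of_add_period (hF : ∀ m, F (m + n) = F m + p) (c : ℕ) :
    ∑ j ∈ range n, (F (j + c) - F j) = c * p := by
  induction c with
  | zero => simp
  | succ c ih =>
    calc ∑ j ∈ range n, (F (j + (c + 1)) - F j)
        = ∑ j ∈ range n, (F (j + 1 + c) - F (j + c)) + ∑ j ∈ range n, (F (j + c) - F j) := by
          rw [← sum_add_distrib]
          exact sum_congr rfl fun j _ => by rw [← add_assoc, add_right_comm j 1 c]; ring
      _ = F (n + c) - F (0 + c) + c * p := by rw [sum_range_sub (fun j => F (j + c)), ih]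
      _ = (c + 1 : ℕ) * p := by rw [add_comm n, hF, zero_add]; push_cast; ring

lemma exists_sub_le_of_add_period (hn : 0 < n) (hF : ∀ m, F (m + n) = F m + p) (c : ℕ) :
    ∃ j < n, F (j + c) - F j ≤ c * p / n := by
  have hsum : ∑ j ∈ range n, (F (j + c) - F j) ≤ ∑ _j ∈ range n, c * p / n := by
    rw [sum_range_sub_eq_of_add_period hF, sum_const, card_range, nsmul_eq_mul,
      mul_div_cancel₀ _ (Nat.cast_ne_zero.2 hn.ne')]
  obtain ⟨j, hj, hle⟩ := exists_le_of_sum_le (nonempty_range_iff.2 hn.ne') hsum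
  exact ⟨j, mem_range.1 hj, hle⟩

end Telescoping

section PeriodicExtension

variable {n : ℕ} [NeZero n] (a : Fin n → ℝ) (p : ℝ)

/-- The sequence `a 0, …, a (n-1), a 0 + p, …, a (n-1) + p, a 0 + 2p, …`. -/
def periodicExtension (m : ℕ) : ℝ :=
  a (Fin.ofNat n m) + (m / n : ℕ) * p

lemma periodicExtension_add_period (m : ℕ) :
    periodicExtension a p (m + n) = periodicExtension a p m + p := by
  have hcast : Fin.ofNat n (m + n) = Fin.ofNat n m := by simp [Fin.ofNat]
  rw [periodicExtension, periodicExtension, hcast, Nat.add_div_right _ (NeZero.pos n)]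
  push_cast
  ring

lemma periodicExtension_monotone (ha : Monotone a) (hp : ∀ i j, a i ≤ a j + p) :
    Monotone (periodicExtension a p) := by
  refine monotone_nat_of_le_succ fun m => ?_
  have hn := NeZero.pos n
  have hm := Nat.mod_add_div m n
  have hr := Nat.mod_lt m hn
  unfold periodicExtension
  rcases (Nat.succ_le_of_lt hr).lt_or_eq with hlt | heq
  · obtain ⟨hq, hr'⟩ := (Nat.div_mod_unique hn).2 (⟨by omega, hlt⟩ :
      m % n + 1 + n * (m / n) = m + 1 ∧ m % n + 1 < n)
    have hle : Fin.ofNat n m ≤ Fin.ofNat n (m + 1) := by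
      rw [Fin.le_def, Fin.val_ofNat, Fin.val_ofNat, hr']
      exact Nat.le_succ _
    rw [hq]
    linarith [ha hle]
  · obtain ⟨hq, -⟩ := (Nat.div_mod_unique hn).2 (⟨by rw [Nat.mul_succ]; omega, hn⟩ :
      0 + n * (m / n + 1) = m + 1 ∧ 0 < n)
    rw [hq]
    push_cast
    linarith [hp (Fin.ofNat n m) (Fin.ofNat n (m + 1))]

lemma exp_periodicExtension_pi_mul_I (m : ℕ) :
    Complex.exp (periodicExtension a π m * I) =
      (-1) ^ (m / n) * Complex.exp (a (Fin.ofNat n m) * I) := by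
  rw [periodicExtension]
  push_cast
  rw [add_mul, Complex.exp_add, mul_assoc, Complex.exp_nat_mul, exp_pi_mul_I, mul_comm]

end PeriodicExtension

theorem stmt_16 (n k : ℕ) (hk : 2 ≤ k) (hkn : k ≤ n)
    (u : Fin n → ℂ) (hu : ∀ i, ‖u i‖ = 1) :
    ∃ (s : Fin k → Fin n) (ε : Fin k → ℝ) (θ : ℝ),
      Function.Injective s ∧ (∀ i, ε i = 1 ∨ ε i = -1) ∧
      ∀ i, ∃ ψ ∈ Set.Icc θ (θ + ((k : ℝ) - 1) * Real.pi / n),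
        ε i • u (s i) = Complex.exp (ψ * Complex.I) := by
  obtain ⟨c, rfl⟩ : ∃ c, k = c + 1 := ⟨k - 1, by omega⟩
  have : NeZero n := ⟨by omega⟩
  choose e φ he hφ hspec using fun i => exists_sign_smul_eq_exp_mul_I (hu i)
  set σ := Tuple.sort φ
  set F := periodicExtension (φ ∘ σ) π
  have hF : Monotone F := periodicExtension_monotone _ _ (Tuple.monotone_sort φ) fun i j => by
    simp only [Function.comp_apply]
    linarith [(hφ (σ i)).2, (hφ (σ j)).1]
  obtain ⟨j, -, hj⟩ :=
    exists_sub_le_of_add_period (NeZero.pos n) (periodicExtension_add_period _ _) c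
  let s (i : Fin (c + 1)) : Fin n := σ (Fin.ofNat n (j + i))
  refine ⟨s, fun i => (-1) ^ ((j + i) / n) * e (s i), F j,
    σ.injective.comp (Fin.ofNat_add_injective hkn j), fun i => ?_,
    fun i => ⟨F (j + i), ⟨hF (by omega), ?_⟩, ?_⟩⟩
  · rcases neg_one_pow_eq_or ℝ ((j + i) / n) with h | h <;> rcases he (s i) with h' | h' <;>
      simp [h, h']
  · calc F (j + i) ≤ F (j + c) := hF (by omega)
      _ ≤ F j + c * π / n := sub_le_iff_le_add'.1 hj
      _ = _ := by push_cast; ring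
  · rw [exp_periodicExtension_pi_mul_I, Function.comp_apply, ← hspec, real_smul, real_smul]
    push_cast
    ring
end

section
/- For odd k with 3 ≤ k ≤ n, from any n unit vectors in ℝ² one can select k of them with signs ε_1, ..., ε_k ∈ {±1} such that the signed sum has Euclidean norm at least √(1 + (k−1)(k+1)·cos²((k−1)π/(2n))). -/
/-!
Write `u i = ± exp (x i * I)` with `x i ∈ [0, π)` and sort the angles. The `2 * n` vectors `± u i`
then have angles `x₀ ≤ ⋯ ≤ xₙ₋₁ < x₀ + π ≤ ⋯ ≤ xₙ₋₁ + π`, and any `k ≤ n` cyclically consecutive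
ones come from distinct indices. The `n` runs of `k` consecutive angles have total spread
`(k - 1) * π`, so one of them lies in an arc of length `2 * θ = (k - 1) * π / n`. Centre this arc on
the real axis: each vector can be replaced by `cos θ ± sin θ * I` without increasing the norm of the
sum, which becomes `k * cos θ + t * sin θ * I` with `t ≡ k` odd, of squared norm at least
`k² cos² θ + sin² θ = 1 + (k² - 1) cos² θ`.
-/

open Finset Complex Real

section PeriodicExtension

variable {n : ℕ} [NeZero n]

noncomputable def periodicExt (y : Fin n → ℝ) (P : ℝ) (p : ℕ) : ℝ :=
  y (Fin.ofNat n p) + (p / n : ℕ) * P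

lemma periodicExt_add_self (y : Fin n → ℝ) (P : ℝ) (p : ℕ) :
    periodicExt y P (p + n) = periodicExt y P p + P := by
  have hn : 0 < n := Nat.pos_of_neZero n
  simp only [periodicExt, Nat.add_div_right p hn, Fin.ofNat, Nat.add_mod_right]
  push_cast
  ring

lemma monotone_periodicExt {y : Fin n → ℝ} {P : ℝ} (hy : Monotone y)
    (hspan : ∀ i j, y i ≤ y j + P) : Monotone (periodicExt y P) := by
  intro p q hpq
  have hP : 0 ≤ P := by simpa using hspan 0 0
  rcases (Nat.div_le_div_right (c := n) hpq).lt_or_eq with hlt | heq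
  · have hlt' : ((p / n : ℕ) : ℝ) + 1 ≤ (q / n : ℕ) := by exact_mod_cast hlt
    have := hspan (Fin.ofNat n p) (Fin.ofNat n q)
    simp only [periodicExt]
    nlinarith
  · have hmod : p % n ≤ q % n := by
      have := Nat.div_add_mod p n; have := Nat.div_add_mod q n
      rw [heq] at *; omega
    simp only [periodicExt, heq]
    gcongr
    exact hy (Fin.mk_le_mk.mpr (by simpa [Fin.val_ofNat] using hmod))

lemma injective_ofNat_add {k : ℕ} (hkn : k ≤ n) (j : ℕ) :
    Function.Injective fun l : Fin k => Fin.ofNat n (j + l) := by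
  intro a b hab
  have hmod : (j + (a : ℕ)) % n = (j + b) % n := by
    simpa [Fin.ext_iff, Fin.val_ofNat] using hab
  exact Fin.ext ((Nat.ModEq.add_left_cancel' j hmod).eq_of_lt_of_lt (by omega) (by omega))

end PeriodicExtension

lemma sum_range_sub_add_comm (f : ℕ → ℝ) (a b : ℕ) :
    ∑ j ∈ range a, (f (j + b) - f j) = ∑ j ∈ range b, (f (j + a) - f j) := by
  have h := sum_range_add f a b
  rw [add_comm a b, sum_range_add] at h
  simp only [sum_sub_distrib, add_comm _ a, add_comm _ b]
  linarith

lemma exists_lt_sub_le_of_add_eq {f : ℕ → ℝ} {n m : ℕ} (hn : 0 < n) {P : ℝ}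
    (hf : ∀ j, f (j + n) = f j + P) : ∃ j < n, f (j + m) - f j ≤ m * P / n := by
  have htotal : ∑ j ∈ range n, (f (j + m) - f j) = ∑ _j ∈ range n, m * P / n := by
    simp only [sum_range_sub_add_comm, hf, add_sub_cancel_left, sum_const, card_range,
      nsmul_eq_mul]
    field_simp
  obtain ⟨j, hj, hle⟩ := exists_le_of_sum_le (nonempty_range_iff.mpr hn.ne') htotal.le
  exact ⟨j, mem_range.mp hj, hle⟩

lemma exp_add_int_mul_pi_mul_I (φ : ℝ) (m : ℤ) :
    exp (↑(φ + m * π) * I) = ((-1 : ℝ) ^ m : ℝ) • exp (φ * I) := by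
  have hpow : exp (↑(m * π) * I) = ((-1 : ℝ) ^ m : ℝ) := by
    rw [show (↑(m * π) * I : ℂ) = m * (π * I) by push_cast; ring, exp_int_mul, exp_pi_mul_I]
    push_cast; rfl
  rw [ofReal_add, add_mul, Complex.exp_add, hpow, real_smul, mul_comm]

lemma exists_angle_mem_Ico_pi {u : ℂ} (hu : ‖u‖ = 1) :
    ∃ x ∈ Set.Ico 0 π, ∃ m : ℤ, u = exp (↑(x + m * π) * I) := by
  refine ⟨toIcoMod Real.pi_pos 0 (arg u), by simpa using toIcoMod_mem_Ico Real.pi_pos 0 (arg u),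
    toIcoDiv Real.pi_pos 0 (arg u), ?_⟩
  rw [← self_sub_toIcoDiv_zsmul Real.pi_pos 0 (arg u), zsmul_eq_mul, sub_add_cancel]
  simpa [hu] using (norm_mul_exp_arg_mul_I u).symm

lemma exists_signed_window {n k : ℕ} (hk : 0 < k) (hkn : k ≤ n) (u : Fin n → ℂ)
    (hu : ∀ i, ‖u i‖ = 1) :
    ∃ (s : Fin k → Fin n) (ε ψ : Fin k → ℝ) (μ : ℝ), Function.Injective s ∧
      (∀ l, ε l = 1 ∨ ε l = -1) ∧ (∀ l, ε l • u (s l) = exp (ψ l * I)) ∧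
      ∀ l, μ ≤ ψ l ∧ ψ l ≤ μ + ((k : ℝ) - 1) * π / n := by
  have : NeZero n := ⟨by omega⟩
  choose x hx m hxm using fun i => exists_angle_mem_Ico_pi (hu i)
  set τ := Tuple.sort x
  set f := periodicExt (x ∘ τ) π
  have hf : Monotone f := monotone_periodicExt (Tuple.monotone_sort x)
    fun i j => by simp only [Function.comp_apply]; linarith [(hx (τ i)).2, (hx (τ j)).1]
  obtain ⟨j, -, hj⟩ := exists_lt_sub_le_of_add_eq (f := f) (m := k - 1) (Nat.pos_of_neZero n)
    (periodicExt_add_self _ π)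
  rw [Nat.cast_pred hk] at hj
  set s : Fin k → Fin n := fun l => τ (Fin.ofNat n (j + l))
  -- `ε l • u (s l)` is the vector of angle `f (j + l)`: the sign undoes the reduction mod `π`
  refine ⟨s, fun l => (-1 : ℝ) ^ (((j + l) / n : ℕ) - m (s l) : ℤ), fun l => f (j + l), f j,
    τ.injective.comp (injective_ofNat_add hkn j), fun l => ?_, fun l => ?_,
    fun l => ⟨hf (by omega), ?_⟩⟩
  · dsimp only
    rw [neg_one_zpow_eq_ite]
    split_ifs <;> simp
  · rw [hxm, ← exp_add_int_mul_pi_mul_I]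
    congr 3
    simp only [f, s, τ, periodicExt, Function.comp_apply, Int.cast_sub, Int.cast_natCast]
    ring
  · have := hf (show j + l ≤ j + (k - 1) by omega)
    dsimp only
    linarith

lemma exists_sign_sq_le_normSq_add {z v : ℂ} {c s : ℝ} (hc : 0 ≤ c) (hs : 0 ≤ s)
    (hcs : c ^ 2 + s ^ 2 = 1) (hz : 0 ≤ z.re) (hv : ‖v‖ = 1) (hvc : c ≤ v.re) :
    ∃ σ : ℤ, (σ = 1 ∨ σ = -1) ∧ (z.re + c) ^ 2 + (z.im + σ * s) ^ 2 ≤ normSq (z + v) := by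
  have hv2 : v.re ^ 2 + v.im ^ 2 = 1 := by
    rw [← one_pow 2, ← hv, Complex.sq_norm, normSq_apply]; ring
  have hvim : -s ≤ v.im ∧ v.im ≤ s := abs_le_of_sq_le_sq' (by nlinarith) hs
  -- with `σ` of sign opposite to `z.im`, `|v.im| ≤ s` gives `z.im * (σ * s) ≤ z.im * v.im`
  refine ⟨if z.im ≤ 0 then 1 else -1, by split_ifs <;> simp, ?_⟩
  rw [normSq_apply, add_re, add_im]
  have hre := mul_le_mul_of_nonneg_left hvc hz
  split_ifs <;> push_cast <;> nlinarith

lemma exists_sq_add_sq_le_normSq_add_sum {c s : ℝ} (hc : 0 ≤ c) (hs : 0 ≤ s)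
    (hcs : c ^ 2 + s ^ 2 = 1) {m : ℕ} (v : Fin m → ℂ) (hv : ∀ j, ‖v j‖ = 1)
    (hvc : ∀ j, c ≤ (v j).re) (z : ℂ) (hz : 0 ≤ z.re) :
    ∃ t : ℤ, Even (t - m) ∧ (z.re + m * c) ^ 2 + (z.im + t * s) ^ 2 ≤ normSq (z + ∑ j, v j) := by
  induction m generalizing z with
  | zero => exact ⟨0, by simp, by simp [normSq_apply, sq]⟩
  | succ m ih =>
    set w := z + ∑ j : Fin m, v j.succ
    have hw : 0 ≤ w.re := by
      simp only [w, add_re, re_sum]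
      linarith [sum_nonneg fun (j : Fin m) (_ : j ∈ univ) => hc.trans (hvc j.succ)]
    obtain ⟨σ, hσ, hstep⟩ := exists_sign_sq_le_normSq_add hc hs hcs hw (hv 0) (hvc 0)
    obtain ⟨t, ht, hle⟩ := ih (fun j => v j.succ) (fun j => hv _) (fun j => hvc _)
      ⟨z.re + c, z.im + σ * s⟩ (by dsimp only; linarith)
    refine ⟨t + σ, ?_, ?_⟩
    · have hσ' : Even (σ - 1) := by rcases hσ with rfl | rfl <;> decide
      rw [show t + σ - ((m + 1 : ℕ) : ℤ) = t - m + (σ - 1) by push_cast; ring]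
      exact ht.add hσ'
    · have hw' : normSq (⟨z.re + c, z.im + σ * s⟩ + ∑ j : Fin m, v j.succ) =
          (w.re + c) ^ 2 + (w.im + σ * s) ^ 2 := by
        simp only [w, normSq_apply, add_re, add_im]; ring
      rw [Fin.sum_univ_succ, ← add_assoc, add_right_comm]
      push_cast
      linarith

lemma sqrt_le_norm_sum_exp_of_odd {k : ℕ} (hk : Odd k) {θ μ : ℝ} (hθ : 0 ≤ θ) (hθπ : θ ≤ π / 2)
    (ψ : Fin k → ℝ) (hψ : ∀ l, |ψ l - μ| ≤ θ) :
    √(1 + ((k : ℝ) ^ 2 - 1) * Real.cos θ ^ 2) ≤ ‖∑ l, exp (ψ l * I)‖ := by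
  set v : Fin k → ℂ := fun l => exp (↑(ψ l - μ) * I)
  have hrot : ∑ l, exp (ψ l * I) = exp (μ * I) * ∑ l, v l := by
    rw [mul_sum]
    refine sum_congr rfl fun l _ => ?_
    rw [← Complex.exp_add]
    push_cast
    ring_nf
  have hvc : ∀ l, Real.cos θ ≤ (v l).re := fun l => by
    rw [exp_ofReal_mul_I_re, ← Real.cos_abs (ψ l - μ)]
    exact Real.cos_le_cos_of_nonneg_of_le_pi (abs_nonneg _) (by linarith) (hψ l)
  obtain ⟨t, ht, hle⟩ := exists_sq_add_sq_le_normSq_add_sum (Real.cos_nonneg_of_mem_Icc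
    ⟨by linarith, hθπ⟩) (Real.sin_nonneg_of_nonneg_of_le_pi hθ (by linarith))
    (Real.cos_sq_add_sin_sq θ) v (fun l => norm_exp_ofReal_mul_I _) hvc 0 le_rfl
  have ht1 : (1 : ℝ) ≤ (t : ℝ) ^ 2 := by
    have hodd : Odd t := (Int.even_sub'.mp ht).mpr (hk.natCast)
    have ht0 : t ≠ 0 := by rintro rfl; simp at hodd
    exact_mod_cast (one_le_sq_iff_one_le_abs t).mpr (Int.one_le_abs ht0)
  rw [hrot, norm_mul, norm_exp_ofReal_mul_I, one_mul, Real.sqrt_le_left (norm_nonneg _),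
    Complex.sq_norm]
  simp only [zero_re, zero_im, zero_add] at hle
  nlinarith [Real.cos_sq_add_sin_sq θ, sq_nonneg (Real.sin θ)]

theorem stmt_18_general (n k : ℕ) (hk : Odd k) (hkn : k ≤ n)
    (u : Fin n → ℂ) (hu : ∀ i, ‖u i‖ = 1) :
    ∃ (s : Fin k → Fin n) (ε : Fin k → ℝ),
      Function.Injective s ∧ (∀ i, ε i = 1 ∨ ε i = -1) ∧
      ‖∑ i, ε i • u (s i)‖ ≥
        Real.sqrt (1 + ((k : ℝ) - 1) * ((k : ℝ) + 1) *
          Real.cos (((k : ℝ) - 1) * Real.pi / (2 * n)) ^ 2) := by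
  obtain ⟨s, ε, ψ, μ, hs, hε, hεu, hψ⟩ := exists_signed_window hk.pos hkn u hu
  refine ⟨s, ε, hs, hε, ?_⟩
  set θ := ((k : ℝ) - 1) * π / (2 * n)
  have hk1 : (1 : ℝ) ≤ k := by exact_mod_cast hk.pos
  have hkn' : (k : ℝ) ≤ n := by exact_mod_cast hkn
  have hn : (0 : ℝ) < n := by linarith
  have hθ : 0 ≤ θ := by positivity
  have hθπ : θ ≤ π / 2 := by
    rw [div_le_div_iff₀ (by positivity) two_pos]
    nlinarith [Real.pi_pos]
  have hwidth : ((k : ℝ) - 1) * π / n = 2 * θ := by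
    simp only [θ]
    field_simp
  calc √(1 + ((k : ℝ) - 1) * (k + 1) * Real.cos θ ^ 2)
      = √(1 + ((k : ℝ) ^ 2 - 1) * Real.cos θ ^ 2) := by ring_nf
    _ ≤ ‖∑ l, exp (ψ l * I)‖ := sqrt_le_norm_sum_exp_of_odd hk hθ hθπ ψ (μ := μ + θ) fun l => by
        rw [abs_le]; constructor <;> linarith [hψ l]
    _ = ‖∑ i, ε i • u (s i)‖ := by simp only [hεu]

theorem stmt_18 (n k : ℕ) (hk : Odd k) (hk2 : 3 ≤ k) (hkn : k ≤ n)
    (u : Fin n → ℂ) (hu : ∀ i, ‖u i‖ = 1) :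
    ∃ (s : Fin k → Fin n) (ε : Fin k → ℝ),
      Function.Injective s ∧ (∀ i, ε i = 1 ∨ ε i = -1) ∧
      ‖∑ i, ε i • u (s i)‖ ≥
        Real.sqrt (1 + ((k : ℝ) - 1) * ((k : ℝ) + 1) *
          Real.cos (((k : ℝ) - 1) * Real.pi / (2 * n)) ^ 2) :=
  stmt_18_general n k hk hkn u hu
end

section
/- Let u_1, ..., u_n be unit vectors in ℝ^d (n ≥ d ≥ 2) and let k satisfy 3 ≤ k ≤ n. Then there exist k vectors among ±u_1, ..., ±u_n (with distinct underlying indices) whose sum has Euclidean norm at least k − 8·k^{(d+1)/(d−1)}·n^{−2/(d−1)}. -/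
/-!
With `s = (k / n) ^ (1 / (d - 1))` and `c = 1 - 8 s²` the bound reads `k c`. It suffices to find
`x ≠ 0` with `|⟪u i, x⟫| ≥ c ‖x‖` for `k` indices `i`: with `ε i` the sign of `⟪u i, x⟫`,
`‖∑ ε i • u i‖ ‖x‖ ≥ ⟪∑ ε i • u i, x⟫ ≥ k c ‖x‖`.

Such an `x` is found by averaging over the unit ball `B` rather than over the sphere. The sector
`{x ∈ B | ⟪v, x⟫ ≥ c ‖x‖}` around a unit vector `v` contains a cylinder `[a, b] × B^{d-1}(r)` with
`(b - a) r^{d-1} ≥ s^{d-1} = k / n`, while `B` lies in the cylinder `[-1, 1] × B^{d-1}(1)`. Hence the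
`n` double sectors around `± u i` have total volume at least `k |B|`, so some nonzero point of `B`
lies in `k` of them.
-/

open MeasureTheory Metric Finset
open scoped ENNReal RealInnerProductSpace

section Slab

variable {m : ℕ}

theorem EuclideanSpace.norm_sq_eq_sq_zero_add (x : EuclideanSpace ℝ (Fin (m + 1))) :
    ‖x‖ ^ 2 = x 0 ^ 2 + ∑ j : Fin m, x j.succ ^ 2 := by
  rw [EuclideanSpace.real_norm_sq_eq, Fin.sum_univ_succ]

theorem volume_setOf_sum_sq_le {ρ : ℝ} (hρ : 0 ≤ ρ) :
    volume {y : Fin m → ℝ | ∑ j, y j ^ 2 ≤ ρ ^ 2} =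
      ENNReal.ofReal (ρ ^ m) * volume (ball (0 : EuclideanSpace ℝ (Fin m)) 1) := by
  let e := (MeasurableEquiv.toLp 2 (Fin m → ℝ)).symm
  have hball : e ⁻¹' {y | ∑ j, y j ^ 2 ≤ ρ ^ 2} = closedBall 0 ρ := by
    ext x
    simp only [Set.mem_preimage, Set.mem_ofPred_eq, mem_closedBall_zero_iff]
    rw [← pow_le_pow_iff_left₀ (norm_nonneg x) hρ two_ne_zero,
      EuclideanSpace.real_norm_sq_eq]
    rfl
  rw [← (EuclideanSpace.volume_preserving_symm_measurableEquiv_toLp _).measure_preimage_equiv,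
    hball, Measure.addHaar_closedBall _ _ hρ, finrank_euclideanSpace_fin]

def slab (a b ρ : ℝ) : Set (EuclideanSpace ℝ (Fin (m + 1))) :=
  {x | x 0 ∈ Set.Icc a b ∧ ∑ j : Fin m, x j.succ ^ 2 ≤ ρ ^ 2}

theorem volume_slab (a b : ℝ) {ρ : ℝ} (hρ : 0 ≤ ρ) :
    volume (slab (m := m) a b ρ) =
      ENNReal.ofReal (b - a) * ENNReal.ofReal (ρ ^ m) *
        volume (ball (0 : EuclideanSpace ℝ (Fin m)) 1) := by
  let e := (MeasurableEquiv.toLp 2 (Fin (m + 1) → ℝ)).symm.trans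
    (MeasurableEquiv.piFinSuccAbove (fun _ => ℝ) 0)
  have he : MeasurePreserving e volume (volume.prod volume) :=
    (EuclideanSpace.volume_preserving_symm_measurableEquiv_toLp _).trans
      (measurePreserving_piFinSuccAbove (fun _ => volume) 0)
  have hslab : e ⁻¹' (Set.Icc a b ×ˢ {y | ∑ j, y j ^ 2 ≤ ρ ^ 2}) = slab a b ρ := rfl
  rw [← hslab, he.measure_preimage_equiv, Measure.prod_prod, Real.volume_Icc,
    volume_setOf_sum_sq_le hρ, mul_assoc]

theorem closedBall_subset_slab :
    closedBall (0 : EuclideanSpace ℝ (Fin (m + 1))) 1 ⊆ slab (-1) 1 1 := by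
  intro x hx
  have hx2 : x 0 ^ 2 + ∑ j : Fin m, x j.succ ^ 2 ≤ 1 := by
    rw [← EuclideanSpace.norm_sq_eq_sq_zero_add]
    exact pow_le_one₀ (norm_nonneg x) (mem_closedBall_zero_iff.1 hx)
  have htail : 0 ≤ ∑ j : Fin m, x j.succ ^ 2 := by positivity
  exact ⟨abs_le.1 (abs_le_of_sq_le_sq (by linarith [sq_nonneg (x 0)]) zero_le_one),
    by rw [one_pow]; linarith [sq_nonneg (x 0)]⟩

theorem volume_closedBall_le_two_mul_volume_ball :
    volume (closedBall (0 : EuclideanSpace ℝ (Fin (m + 1))) 1) ≤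
      2 * volume (ball (0 : EuclideanSpace ℝ (Fin m)) 1) := by
  calc _ ≤ volume (slab (m := m) (-1) 1 1) := measure_mono closedBall_subset_slab
    _ = _ := by rw [volume_slab _ _ zero_le_one]; norm_num

end Slab

section Sector

variable {E : Type*} [NormedAddCommGroup E] [InnerProductSpace ℝ E]

def sphericalSector (c : ℝ) (v : E) : Set E :=
  {x | c * ‖x‖ ≤ ⟪v, x⟫ ∧ ‖x‖ ≤ 1}

theorem isClosed_sphericalSector (c : ℝ) (v : E) : IsClosed (sphericalSector c v) :=
  (isClosed_le (continuous_const.mul continuous_norm) (continuous_const.inner continuous_id)).inter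
    (isClosed_le continuous_norm continuous_const)

theorem sphericalSector_subset_closedBall (c : ℝ) (v : E) :
    sphericalSector c v ⊆ closedBall 0 1 :=
  fun _ hx => mem_closedBall_zero_iff.2 hx.2

theorem sphericalSector_inter_neg_subset {c : ℝ} (hc : 0 < c) (v : E) :
    sphericalSector c v ∩ sphericalSector c (-v) ⊆ {0} := by
  rintro x ⟨⟨hx, -⟩, hx', -⟩
  rw [inner_neg_left] at hx'
  have : ‖x‖ ≤ 0 := by nlinarith
  simpa using this

theorem volume_sphericalSector_eq [FiniteDimensional ℝ E] [MeasurableSpace E] [BorelSpace E]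
    (c : ℝ) {v w : E} (h : ‖v‖ = ‖w‖) :
    volume (sphericalSector c v) = volume (sphericalSector c w) := by
  let R := (ℝ ∙ (v - w))ᗮ.reflection
  have hR : R ⁻¹' sphericalSector c w = sphericalSector c v := by
    ext x
    simp only [sphericalSector, Set.mem_preimage, Set.mem_ofPred_eq]
    rw [R.norm_map, ← Submodule.reflection_sub h, R.inner_map_map]
  rw [← hR, R.measurePreserving.measure_preimage
    (isClosed_sphericalSector c w).measurableSet.nullMeasurableSet]

theorem measure_sphericalSector_union_neg [MeasurableSpace E] [OpensMeasurableSpace E]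
    (μ : Measure E) [NullSingletonClass μ] {c : ℝ} (hc : 0 < c) (v : E) :
    μ (sphericalSector c v ∪ sphericalSector c (-v)) =
      μ (sphericalSector c v) + μ (sphericalSector c (-v)) :=
  measure_union₀ (isClosed_sphericalSector c (-v)).measurableSet.nullMeasurableSet
    (measure_mono_null (sphericalSector_inter_neg_subset hc v) (measure_singleton 0))

end Sector

-- `slab (c / 2) (√(3 + c²) / 2) (slabRadius c)` has its outer rim on the unit sphere and its
-- inner rim on the cone `x 0 = c ‖x‖`; `slabWidth c` is its length.
noncomputable def slabWidth (c : ℝ) : ℝ := (√(3 + c ^ 2) - c) / 2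

noncomputable def slabRadius (c : ℝ) : ℝ := √(1 - c ^ 2) / 2

theorem slabWidth_nonneg (c : ℝ) : 0 ≤ slabWidth c := by
  have : c ≤ √(3 + c ^ 2) := Real.le_sqrt_of_sq_le (by linarith)
  unfold slabWidth; linarith

theorem slabWidth_le_one {c : ℝ} (hc₀ : 0 ≤ c) : slabWidth c ≤ 1 := by
  have : √(3 + c ^ 2) ≤ 2 + c := Real.sqrt_le_iff.2 ⟨by linarith, by nlinarith⟩
  unfold slabWidth; linarith

theorem slabRadius_nonneg (c : ℝ) : 0 ≤ slabRadius c := by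
  unfold slabRadius; positivity

section SectorVolume

variable {m : ℕ}

theorem slab_subset_sphericalSector {c : ℝ} (hc₀ : 0 ≤ c) (hc₁ : c ≤ 1) :
    slab (m := m) (c / 2) (√(3 + c ^ 2) / 2) (slabRadius c) ⊆
      sphericalSector c (EuclideanSpace.single 0 1) := by
  rintro x ⟨⟨ha, hb⟩, hρ⟩
  have hx₀ : 0 ≤ x 0 := by linarith
  have hb' : x 0 ^ 2 ≤ (3 + c ^ 2) / 4 := by
    calc x 0 ^ 2 ≤ (√(3 + c ^ 2) / 2) ^ 2 := pow_le_pow_left₀ hx₀ hb 2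
      _ = _ := by rw [div_pow, Real.sq_sqrt (by positivity)]; norm_num
  rw [slabRadius, div_pow, Real.sq_sqrt (by nlinarith)] at hρ
  have hnorm := EuclideanSpace.norm_sq_eq_sq_zero_add x
  refine ⟨?_, (sq_le_one_iff₀ (norm_nonneg x)).1 (by linarith)⟩
  rw [EuclideanSpace.inner_single_left, map_one, one_mul]
  refine (pow_le_pow_iff_left₀ (by positivity) hx₀ two_ne_zero).1 ?_
  have hc₂ : 0 ≤ 1 - c ^ 2 := by nlinarith
  nlinarith [mul_le_mul_of_nonneg_left hρ (sq_nonneg c),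
    mul_le_mul_of_nonneg_left (pow_le_pow_left₀ (by positivity) ha 2) hc₂]

theorem le_volume_sphericalSector {c : ℝ} (hc₀ : 0 ≤ c) (hc₁ : c ≤ 1)
    {v : EuclideanSpace ℝ (Fin (m + 1))} (hv : ‖v‖ = 1) :
    ENNReal.ofReal (slabWidth c * slabRadius c ^ m) *
        volume (ball (0 : EuclideanSpace ℝ (Fin m)) 1) ≤
      volume (sphericalSector c v) := by
  have he : ‖(EuclideanSpace.single 0 1 : EuclideanSpace ℝ (Fin (m + 1)))‖ = 1 := by simp
  rw [volume_sphericalSector_eq c (hv.trans he.symm),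
    ENNReal.ofReal_mul (slabWidth_nonneg c),
    show slabWidth c = √(3 + c ^ 2) / 2 - c / 2 by rw [slabWidth]; ring,
    ← volume_slab _ _ (slabRadius_nonneg c)]
  exact measure_mono (slab_subset_sphericalSector hc₀ hc₁)

end SectorVolume

theorem le_slabWidth_mul_slabRadius {c s : ℝ} (hc₀ : 0 ≤ c) (hc₁ : c ≤ 1) (hs : 0 ≤ s)
    (hcs : 1 - c = 8 * s ^ 2) : s ≤ slabWidth c * slabRadius c := by
  refine (pow_le_pow_iff_left₀ hs (mul_nonneg (slabWidth_nonneg c) (slabRadius_nonneg c))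
    two_ne_zero).1 ?_
  rw [slabWidth, slabRadius, mul_pow, div_pow, div_pow, Real.sq_sqrt (by nlinarith)]
  set A := √(3 + c ^ 2)
  have hA : A ^ 2 = 3 + c ^ 2 := Real.sq_sqrt (by positivity)
  have hA₂ : A ≤ 2 := Real.sqrt_le_iff.2 ⟨zero_le_two, by nlinarith⟩
  have hAc : c ≤ A := Real.le_sqrt_of_sq_le (by linarith)
  -- `(A - c) (A + c) = 3` with `A ≤ 2`, then `2 (2 + c)² ≤ 9 (1 + c)` on `[0, 1]`
  have h9 : 9 ≤ (A - c) ^ 2 * (2 + c) ^ 2 := by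
    have : 3 ≤ (A - c) * (2 + c) := by nlinarith
    nlinarith
  have hkey : 2 ≤ (A - c) ^ 2 * (1 + c) := by
    have : 2 * (2 + c) ^ 2 ≤ (A - c) ^ 2 * (1 + c) * (2 + c) ^ 2 := by nlinarith
    exact le_of_mul_le_mul_right this (by positivity)
  nlinarith

theorem pow_succ_le_slabWidth_mul_slabRadius_pow (m : ℕ) {c s : ℝ} (hc₀ : 0 ≤ c)
    (hc₁ : c ≤ 1) (hs : 0 ≤ s) (hcs : 1 - c = 8 * s ^ 2) :
    s ^ (m + 1) ≤ slabWidth c * slabRadius c ^ (m + 1) := by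
  have h := le_slabWidth_mul_slabRadius hc₀ hc₁ hs hcs
  have hρ : s ≤ slabRadius c :=
    h.trans (mul_le_of_le_one_left (slabRadius_nonneg c) (slabWidth_le_one hc₀))
  calc s ^ (m + 1) = s ^ m * s := pow_succ s m
    _ ≤ slabRadius c ^ m * (slabWidth c * slabRadius c) := by
      gcongr
      exact pow_nonneg (slabRadius_nonneg c) m
    _ = _ := by ring

theorem measure_setOf_exists_card_le_ne_zero {α ι : Type*} [MeasurableSpace α] [Fintype ι]
    {μ : Measure α} {s : Set α} {A : ι → Set α} {k : ℕ} (hs : MeasurableSet s)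
    (hμs₀ : μ s ≠ 0) (hμs : μ s ≠ ∞) (hA : ∀ i, MeasurableSet (A i))
    (hk : k * μ s ≤ ∑ i, μ (A i ∩ s)) :
    μ {x | ∃ T : Finset ι, k ≤ #T ∧ ∀ i ∈ T, x ∈ A i} ≠ 0 := by
  classical
  have hcount : ∫⁻ x in s, (#{i | x ∈ A i} : ℝ≥0∞) ∂μ = ∑ i, μ (A i ∩ s) := by
    have hsum (x : α) : (#{i | x ∈ A i} : ℝ≥0∞) = ∑ i, (A i).indicator 1 x := by
      simp [Set.indicator_apply]
    simp_rw [hsum]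
    rw [lintegral_finsetSum _ fun i _ => measurable_one.indicator (hA i)]
    simp_rw [lintegral_indicator_one (hA _), Measure.restrict_apply (hA _)]
  have hfin : ∫⁻ x in s, (#{i | x ∈ A i} : ℝ≥0∞) ∂μ ≠ ∞ := by
    rw [hcount]
    exact ENNReal.sum_ne_top.2 fun i _ =>
      ne_top_of_le_ne_top hμs (measure_mono Set.inter_subset_right)
  refine fun hG ↦ (setLIntegral_strict_mono (g := fun _ ↦ (k : ℝ≥0∞)) hs hμs₀ measurable_const
    hfin ?_).not_ge ?_
  · refine (measure_eq_zero_iff_ae_notMem.1 hG).mono fun x hx _ => ?_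
    exact_mod_cast not_le.1 fun h => hx ⟨_, h, fun i hi => (mem_filter.1 hi).2⟩
  · rwa [hcount, setLIntegral_const]

theorem exists_ne_zero_le_abs_inner_of_le_card {m n k : ℕ}
    {u : Fin n → EuclideanSpace ℝ (Fin (m + 2))} (hu : ∀ i, ‖u i‖ = 1) {c : ℝ} (hc₀ : 0 < c)
    (hc₁ : c ≤ 1) (hk : (k : ℝ) ≤ n * (slabWidth c * slabRadius c ^ (m + 1))) :
    ∃ x ≠ 0, ∃ T : Finset (Fin n), k ≤ #T ∧ ∀ i ∈ T, c * ‖x‖ ≤ |⟪u i, x⟫| := by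
  let A i := sphericalSector c (u i) ∪ sphericalSector c (-u i)
  let B := closedBall (0 : EuclideanSpace ℝ (Fin (m + 2))) 1
  let V := volume (ball (0 : EuclideanSpace ℝ (Fin (m + 1))) 1)
  let W := ENNReal.ofReal (slabWidth c * slabRadius c ^ (m + 1)) * V
  have hA i : 2 * W ≤ volume (A i ∩ B) := by
    rw [Set.inter_eq_left.2 (Set.union_subset (sphericalSector_subset_closedBall _ _)
      (sphericalSector_subset_closedBall _ _)), measure_sphericalSector_union_neg _ hc₀, two_mul]
    exact add_le_add (le_volume_sphericalSector hc₀.le hc₁ (hu i))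
      (le_volume_sphericalSector hc₀.le hc₁ (by rw [norm_neg, hu i]))
  have hk' : (k : ℝ≥0∞) ≤ n * ENNReal.ofReal (slabWidth c * slabRadius c ^ (m + 1)) := by
    rw [← ENNReal.ofReal_natCast, ← ENNReal.ofReal_natCast n,
      ← ENNReal.ofReal_mul (Nat.cast_nonneg _)]
    exact ENNReal.ofReal_le_ofReal hk
  have hvol : k * volume B ≤ ∑ i, volume (A i ∩ B) :=
    calc k * volume B ≤ k * (2 * V) := by gcongr; exact volume_closedBall_le_two_mul_volume_ball
      _ ≤ n * ENNReal.ofReal (slabWidth c * slabRadius c ^ (m + 1)) * (2 * V) := by gcongr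
      _ = ∑ _i : Fin n, 2 * W := by
        rw [sum_const, card_univ, Fintype.card_fin, nsmul_eq_mul]; ring
      _ ≤ _ := sum_le_sum fun i _ => hA i
  have hpos := measure_setOf_exists_card_le_ne_zero measurableSet_closedBall
    (measure_closedBall_pos volume 0 one_pos).ne' measure_closedBall_lt_top.ne
    (fun i => ((isClosed_sphericalSector c _).union (isClosed_sphericalSector c _)).measurableSet)
    hvol
  rw [← measure_sdiff_null (measure_singleton 0)] at hpos
  obtain ⟨x, ⟨T, hT, hxT⟩, hx⟩ := nonempty_of_measure_ne_zero hpos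
  refine ⟨x, hx, T, hT, fun i hi => ?_⟩
  rcases hxT i hi with h | h
  · exact h.1.trans (le_abs_self _)
  · exact h.1.trans (by rw [inner_neg_left]; exact neg_le_abs _)

theorem exists_sign_mul_le_norm_sum {E ι : Type*} [NormedAddCommGroup E] [InnerProductSpace ℝ E]
    {u : ι → E} {x : E} (hx : x ≠ 0) {c : ℝ} {k : ℕ} (σ : Fin k → ι)
    (h : ∀ i, c * ‖x‖ ≤ |⟪u (σ i), x⟫|) :
    ∃ ε : Fin k → ℝ, (∀ i, ε i = 1 ∨ ε i = -1) ∧ k * c ≤ ‖∑ i, ε i • u (σ i)‖ := by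
  let ε i : ℝ := if 0 ≤ ⟪u (σ i), x⟫ then 1 else -1
  have hε i : |⟪u (σ i), x⟫| = ε i * ⟪u (σ i), x⟫ := by
    by_cases h : 0 ≤ ⟪u (σ i), x⟫
    · simp [ε, h, abs_of_nonneg h]
    · simp [ε, h, abs_of_neg (not_le.1 h)]
  refine ⟨ε, fun i => by by_cases h : 0 ≤ ⟪u (σ i), x⟫ <;> simp [ε, h], ?_⟩
  refine le_of_mul_le_mul_right ?_ (norm_pos_iff.2 hx)
  calc k * c * ‖x‖ = ∑ _i : Fin k, c * ‖x‖ := by simp [mul_assoc]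
    _ ≤ ∑ i, ε i * ⟪u (σ i), x⟫ := sum_le_sum fun i _ => (h i).trans_eq (hε i)
    _ = ⟪∑ i, ε i • u (σ i), x⟫ := by simp [sum_inner, real_inner_smul_left]
    _ ≤ _ := real_inner_le_norm _ _

theorem sub_eight_mul_rpow_eq {k n d : ℝ} (hk : 0 ≤ k) (hn : 0 ≤ n) (hd : 1 < d) :
    k - 8 * k ^ ((d + 1) / (d - 1)) * n ^ (-2 / (d - 1)) =
      k * (1 - 8 * ((k / n) ^ (1 / (d - 1))) ^ 2) := by
  have hd' : d - 1 ≠ 0 := by linarith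
  rw [← Real.rpow_natCast, ← Real.rpow_mul (div_nonneg hk hn), Real.div_rpow hk hn,
    show (d + 1) / (d - 1) = 1 + 2 / (d - 1) by field_simp; ring,
    Real.rpow_add' hk (by positivity), Real.rpow_one, neg_div, Real.rpow_neg hn]
  push_cast
  rw [one_div_mul_eq_div, div_eq_mul_inv _ (n ^ _)]
  ring

theorem stmt_19_general (d n k : ℕ) (hd : 2 ≤ d) (hkn : k ≤ n)
    (u : Fin n → EuclideanSpace ℝ (Fin d)) (hu : ∀ i, ‖u i‖ = 1) :
    ∃ (s : Fin k → Fin n) (ε : Fin k → ℝ),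
      Function.Injective s ∧ (∀ i, ε i = 1 ∨ ε i = -1) ∧
      ‖∑ i, ε i • u (s i)‖ ≥
        (k : ℝ) - 8 * (k : ℝ) ^ (((d : ℝ) + 1) / ((d : ℝ) - 1)) *
          (n : ℝ) ^ (-(2 : ℝ) / ((d : ℝ) - 1)) := by
  obtain ⟨m, rfl⟩ : ∃ m, d = m + 2 := ⟨d - 2, by omega⟩
  have hd₁ : ((m + 2 : ℕ) : ℝ) - 1 = (m + 1 : ℕ) := by push_cast; ring
  rw [sub_eight_mul_rpow_eq k.cast_nonneg n.cast_nonneg (by push_cast; linarith), hd₁, one_div]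
  set s := ((k : ℝ) / n) ^ ((m + 1 : ℕ) : ℝ)⁻¹
  have hs : 0 ≤ s := by positivity
  have hs_pow : s ^ (m + 1) = k / n := Real.rpow_inv_natCast_pow (by positivity) (by omega)
  rcases le_or_gt (1 - 8 * s ^ 2) 0 with hc | hc
  · refine ⟨Fin.castLE hkn, fun _ => 1, Fin.castLE_injective hkn, fun _ => Or.inl rfl, ?_⟩
    exact (mul_nonpos_of_nonneg_of_nonpos k.cast_nonneg hc).trans (norm_nonneg _)
  have hk : (k : ℝ) ≤ n * (slabWidth (1 - 8 * s ^ 2) * slabRadius (1 - 8 * s ^ 2) ^ (m + 1)) :=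
    calc (k : ℝ) ≤ n * s ^ (m + 1) := by
          rw [hs_pow]
          rcases n.eq_zero_or_pos with rfl | hn
          · simp [Nat.le_zero.1 hkn]
          · rw [mul_div_cancel₀ _ (by positivity)]
      _ ≤ _ := by
          gcongr
          exact pow_succ_le_slabWidth_mul_slabRadius_pow m hc.le (by nlinarith) hs (by ring)
  obtain ⟨x, hx, T, hT, hxT⟩ := exists_ne_zero_le_abs_inner_of_le_card hu hc (by nlinarith) hk
  obtain ⟨σ, hσ⟩ := Function.Embedding.exists_of_card_le_finset (α := Fin k) (by simpa using hT)
  obtain ⟨ε, hε, hsum⟩ := exists_sign_mul_le_norm_sum hx σ fun i => hxT _ (hσ ⟨i, rfl⟩)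
  exact ⟨σ, ε, σ.injective, hε, hsum⟩

theorem stmt_19 (d n k : ℕ) (hd : 2 ≤ d) (hn : d ≤ n) (hk3 : 3 ≤ k) (hkn : k ≤ n)
    (u : Fin n → EuclideanSpace ℝ (Fin d)) (hu : ∀ i, ‖u i‖ = 1) :
    ∃ (s : Fin k → Fin n) (ε : Fin k → ℝ),
      Function.Injective s ∧ (∀ i, ε i = 1 ∨ ε i = -1) ∧
      ‖∑ i, ε i • u (s i)‖ ≥
        (k : ℝ) - 8 * (k : ℝ) ^ (((d : ℝ) + 1) / ((d : ℝ) - 1)) *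
          (n : ℝ) ^ (-(2 : ℝ) / ((d : ℝ) - 1)) :=
  stmt_19_general d n k hd hkn u hu
end
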